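/- arXiv:2302.08041 — 4 statements merged into one kernel-verified Lean document; each statement's English description precedes it below -/
import Mathlib

section
/- Suppose μ, σ, η are real with σ > 0 and η < 0, and let x > 1 be the real root of x³ + 3x² − 4 − η² = 0. Define s = √(ln x), m = (1/2)·ln(σ²/(x(x−1))), τ = −μ − σ/√(x−1). Then for N ~ N(0,1), the random variable W = −(e^{sN+m} + τ) satisfies E[W] = μ, Var(W) = σ², and E[(W − μ)³]/σ³ = η. -/
open MeasureTheory ProbabilityTheory Real

/-!
`Y = exp (s N + m)` is lognormal: by the Gaussian moment generating function,
`E[Y ^ k] = c ^ k q ^ (k choose 2)` with `c = exp (m + s² / 2) = E[Y]` and `q = exp s² = x`.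
Hence `E[(Y - c)²] = c² (q - 1)` and `E[(Y - c)³] = c³ (q - 1)² (q + 2)`.
The choice of `m` makes `c = σ / √(x - 1)`, and then `τ` makes `W - μ = -(Y - c)`;
the variance is then `σ²`, and the skewness is `-√(x - 1) (x + 2)`, which is
`η` because the cubic factors as `x³ + 3x² - 4 = (x - 1)(x + 2)²`.
-/

section CentralMoments

variable {Ω : Type*} [MeasurableSpace Ω] {P : Measure Ω} [IsProbabilityMeasure P] {Y : Ω → ℝ}

lemma integral_sub_const_sq (h1 : Integrable Y P) (h2 : Integrable (fun ω => Y ω ^ 2) P)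
    (c : ℝ) : ∫ ω, (Y ω - c) ^ 2 ∂P = ∫ ω, Y ω ^ 2 ∂P - 2 * c * ∫ ω, Y ω ∂P + c ^ 2 := by
  have hexp : (fun ω => (Y ω - c) ^ 2) = fun ω => Y ω ^ 2 - 2 * c * Y ω + c ^ 2 := by
    funext ω; ring
  have h21 : Integrable (fun ω => Y ω ^ 2 - 2 * c * Y ω) P := h2.sub (h1.const_mul _)
  rw [hexp, integral_add h21 (integrable_const _), integral_sub h2 (h1.const_mul _),
    integral_const_mul, integral_const, probReal_univ, one_smul]

lemma integral_sub_const_cube (h1 : Integrable Y P) (h2 : Integrable (fun ω => Y ω ^ 2) P)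
    (h3 : Integrable (fun ω => Y ω ^ 3) P) (c : ℝ) :
    ∫ ω, (Y ω - c) ^ 3 ∂P
      = ∫ ω, Y ω ^ 3 ∂P - 3 * c * ∫ ω, Y ω ^ 2 ∂P + 3 * c ^ 2 * ∫ ω, Y ω ∂P - c ^ 3 := by
  have hexp : (fun ω => (Y ω - c) ^ 3)
      = fun ω => Y ω ^ 3 - 3 * c * Y ω ^ 2 + 3 * c ^ 2 * Y ω - c ^ 3 := by
    funext ω; ring
  have h32 : Integrable (fun ω => Y ω ^ 3 - 3 * c * Y ω ^ 2) P := h3.sub (h2.const_mul _)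
  have h321 : Integrable (fun ω => Y ω ^ 3 - 3 * c * Y ω ^ 2 + 3 * c ^ 2 * Y ω) P :=
    h32.add (h1.const_mul _)
  rw [hexp, integral_sub h321 (integrable_const _), integral_add h32 (h1.const_mul _),
    integral_sub h3 (h2.const_mul _),
    integral_const_mul, integral_const_mul, integral_const, probReal_univ, one_smul]

end CentralMoments

section Lognormal

variable {Ω : Type*} [MeasurableSpace Ω] {P : Measure Ω} {N : Ω → ℝ}

lemma exp_mul_add_pow (s m t : ℝ) (k : ℕ) :
    exp (s * t + m) ^ k = exp (k * m) * exp (k * s * t) := by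
  rw [← exp_nat_mul, ← exp_add]; ring_nf

lemma integrable_exp_mul_add_pow [NeZero P] (hN : P.map N = gaussianReal 0 1) (s m : ℝ)
    (k : ℕ) : Integrable (fun ω => exp (s * N ω + m) ^ k) P := by
  simp_rw [exp_mul_add_pow]
  refine (mgf_pos_iff.1 ?_).const_mul _
  rw [mgf_gaussianReal hN]
  exact exp_pos _

lemma integral_exp_mul_add_pow (hN : P.map N = gaussianReal 0 1) (s m : ℝ) (k : ℕ) :
    ∫ ω, exp (s * N ω + m) ^ k ∂P = exp (m + s ^ 2 / 2) ^ k * exp (s ^ 2) ^ k.choose 2 := by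
  simp_rw [exp_mul_add_pow]
  rw [integral_const_mul, ← mgf, mgf_gaussianReal hN, ← exp_nat_mul, ← exp_nat_mul, ← exp_add,
    ← exp_add, Nat.cast_choose_two]
  congr 1
  push_cast
  ring

lemma integrable_exp_mul_add [NeZero P] (hN : P.map N = gaussianReal 0 1) (s m : ℝ) :
    Integrable (fun ω => exp (s * N ω + m)) P := by
  simpa using integrable_exp_mul_add_pow hN s m 1

lemma integral_exp_mul_add (hN : P.map N = gaussianReal 0 1) (s m : ℝ) :
    ∫ ω, exp (s * N ω + m) ∂P = exp (m + s ^ 2 / 2) := by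
  simpa using integral_exp_mul_add_pow hN s m 1

lemma integral_exp_mul_add_sub_sq [IsProbabilityMeasure P] (hN : P.map N = gaussianReal 0 1)
    (s m : ℝ) :
    ∫ ω, (exp (s * N ω + m) - exp (m + s ^ 2 / 2)) ^ 2 ∂P
      = exp (m + s ^ 2 / 2) ^ 2 * (exp (s ^ 2) - 1) := by
  rw [integral_sub_const_sq (integrable_exp_mul_add hN s m) (integrable_exp_mul_add_pow hN s m 2),
    integral_exp_mul_add hN, integral_exp_mul_add_pow hN s m 2]
  norm_num
  ring

lemma integral_exp_mul_add_sub_cube [IsProbabilityMeasure P] (hN : P.map N = gaussianReal 0 1)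
    (s m : ℝ) :
    ∫ ω, (exp (s * N ω + m) - exp (m + s ^ 2 / 2)) ^ 3 ∂P
      = exp (m + s ^ 2 / 2) ^ 3 * (exp (s ^ 2) - 1) ^ 2 * (exp (s ^ 2) + 2) := by
  rw [integral_sub_const_cube (integrable_exp_mul_add hN s m)
    (integrable_exp_mul_add_pow hN s m 2) (integrable_exp_mul_add_pow hN s m 3),
    integral_exp_mul_add hN, integral_exp_mul_add_pow hN s m 2, integral_exp_mul_add_pow hN s m 3]
  norm_num [Nat.choose]
  ring

end Lognormal

theorem moment_match_neg_skew_general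
    {Ω : Type*} [MeasurableSpace Ω] (P : Measure Ω) [IsProbabilityMeasure P]
    (N : Ω → ℝ)
    (hN : Measure.map N P = gaussianReal 0 1)
    (μ σ η x : ℝ) (hσ : 0 < σ) (hη : η < 0)
    (hx1 : 1 < x) (hroot : x ^ 3 + 3 * x ^ 2 - 4 - η ^ 2 = 0)
    (s m τ : ℝ)
    (hs : s = Real.sqrt (Real.log x))
    (hm : m = (1 / 2) * Real.log (σ ^ 2 / (x * (x - 1))))
    (hτ : τ = -μ - σ / Real.sqrt (x - 1)) :
    (∫ ω, -(Real.exp (s * N ω + m) + τ) ∂P) = μ ∧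
    (∫ ω, (-(Real.exp (s * N ω + m) + τ) - μ) ^ 2 ∂P) = σ ^ 2 ∧
    (∫ ω, (-(Real.exp (s * N ω + m) + τ) - μ) ^ 3 ∂P) / σ ^ 3 = η := by
  have hx0 : 0 < x - 1 := by linarith
  have hx : exp (s ^ 2) = x := by
    rw [hs, sq_sqrt (log_nonneg hx1.le), exp_log (by linarith)]
  have hmean : exp (m + s ^ 2 / 2) = σ / √(x - 1) := by
    have hpos : 0 < σ ^ 2 / (x * (x - 1)) := by positivity
    rw [show m + s ^ 2 / 2 = (2 * m + s ^ 2) / 2 by ring, exp_half, exp_add, hx, hm,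
      show 2 * (1 / 2 * log (σ ^ 2 / (x * (x - 1)))) = log (σ ^ 2 / (x * (x - 1))) by ring,
      exp_log hpos, show σ ^ 2 / (x * (x - 1)) * x = σ ^ 2 / (x - 1) by field_simp,
      sqrt_div (sq_nonneg σ), sqrt_sq hσ.le]
  have hη_eq : η = -(√(x - 1) * (x + 2)) := by
    rw [← sqrt_sq (show 0 ≤ x + 2 by linarith), ← sqrt_mul (by linarith),
      show (x - 1) * (x + 2) ^ 2 = η ^ 2 by linear_combination hroot, sqrt_sq_eq_abs,
      abs_of_neg hη, neg_neg]
  have hW : ∀ ω, -(exp (s * N ω + m) + τ) - μ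
      = -(exp (s * N ω + m) - exp (m + s ^ 2 / 2)) := by
    intro ω; rw [hτ, hmean]; ring
  refine ⟨?_, ?_, ?_⟩
  · rw [integral_neg, integral_add (integrable_exp_mul_add hN s m) (integrable_const τ),
      integral_exp_mul_add hN, integral_const, probReal_univ, one_smul, hτ, hmean]
    ring
  · simp_rw [hW, neg_sq]
    rw [integral_exp_mul_add_sub_sq hN, hx, hmean, div_pow, sq_sqrt hx0.le]
    field_simp
  · simp_rw [hW, Odd.neg_pow (by decide : Odd 3)]
    rw [integral_neg, integral_exp_mul_add_sub_cube hN, hx, hmean, hη_eq]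
    set a := √(x - 1) with ha
    have ha0 : 0 < a := sqrt_pos.2 hx0
    rw [← sq_sqrt hx0.le, ← ha]
    field_simp

/-- Moment matching for negative skewness: with `x > 1` the root of
`x³+3x²−4−η²=0`, `s = √(ln x)`, `m = ½ ln(σ²/(x(x−1)))`, `τ = −μ − σ/√(x−1)`,
the variable `W = −(e^{sN+m} + τ)` has mean `μ`, variance `σ²`, skewness `η`. -/
theorem moment_match_neg_skew
    {Ω : Type*} [MeasurableSpace Ω] (P : Measure Ω) [IsProbabilityMeasure P]
    (N : Ω → ℝ) (hNmeas : Measurable N)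
    (hN : Measure.map N P = gaussianReal 0 1)
    (μ σ η x : ℝ) (hσ : 0 < σ) (hη : η < 0)
    (hx1 : 1 < x) (hroot : x ^ 3 + 3 * x ^ 2 - 4 - η ^ 2 = 0)
    (s m τ : ℝ)
    (hs : s = Real.sqrt (Real.log x))
    (hm : m = (1 / 2) * Real.log (σ ^ 2 / (x * (x - 1))))
    (hτ : τ = -μ - σ / Real.sqrt (x - 1)) :
    (∫ ω, -(Real.exp (s * N ω + m) + τ) ∂P) = μ ∧
    (∫ ω, (-(Real.exp (s * N ω + m) + τ) - μ) ^ 2 ∂P) = σ ^ 2 ∧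
    (∫ ω, (-(Real.exp (s * N ω + m) + τ) - μ) ^ 3 ∂P) / σ ^ 3 = η :=
  moment_match_neg_skew_general P N hN μ σ η x hσ hη hx1 hroot s m τ hs hm hτ
end

section
/- Let N be standard normal, s > 0, m, τ ∈ ℝ, and K > τ. Then E[(e^{sN+m} + τ − K)⁺] = e^{m + s²/2}·Φ(d₁) − (K − τ)·Φ(d₂), where d₁ = (−ln(K−τ) + m + s²)/s, d₂ = (−ln(K−τ) + m)/s, and Φ is the standard normal cumulative distribution function. -/
open MeasureTheory ProbabilityTheory Real
open scoped ENNReal NNReal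

/-- The standard normal cumulative distribution function. -/
noncomputable def Phi (z : ℝ) : ℝ :=
  ∫ t in Set.Iic z, (Real.sqrt (2 * Real.pi))⁻¹ * Real.exp (-t ^ 2 / 2)

lemma integrable_phi_shift (b : ℝ) :
    Integrable (fun x : ℝ => (Real.sqrt (2 * Real.pi))⁻¹ * Real.exp (-(x - b) ^ 2 / 2)) := by
  have h : Integrable (fun x : ℝ => Real.exp (-(2⁻¹ : ℝ) * x ^ 2)) :=
    integrable_exp_neg_mul_sq (by norm_num)
  have h2 := (h.comp_sub_right b).const_mul (Real.sqrt (2 * Real.pi))⁻¹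
  refine h2.congr ?_
  filter_upwards with x
  congr 1
  ring_nf

lemma phi_shift_integral (a b : ℝ) :
    ∫ x in Set.Ici a, (Real.sqrt (2 * Real.pi))⁻¹ * Real.exp (-(x - b) ^ 2 / 2) = Phi (b - a) := by
  have hemb : MeasurableEmbedding (fun x : ℝ => x + b) :=
    (Homeomorph.addRight b).isClosedEmbedding.measurableEmbedding
  have hmp : MeasurePreserving (fun x : ℝ => x + b) volume volume :=
    measurePreserving_add_right volume b
  have h1 : (∫ x in Set.Ici a, (Real.sqrt (2 * Real.pi))⁻¹ * Real.exp (-(x - b) ^ 2 / 2))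
      = ∫ x in Set.Ioi a, (Real.sqrt (2 * Real.pi))⁻¹ * Real.exp (-(x - b) ^ 2 / 2) :=
    integral_Ici_eq_integral_Ioi
  have h2 : (∫ x in Set.Iic (-a),
        (Real.sqrt (2 * Real.pi))⁻¹ * Real.exp (-(-x - b) ^ 2 / 2))
      = ∫ x in Set.Ioi a, (Real.sqrt (2 * Real.pi))⁻¹ * Real.exp (-(x - b) ^ 2 / 2) := by
    simpa using integral_comp_neg_Iic (-a)
      (fun x => (Real.sqrt (2 * Real.pi))⁻¹ * Real.exp (-(x - b) ^ 2 / 2))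
  have h3 : (∫ x in Set.Iic (-a),
        (Real.sqrt (2 * Real.pi))⁻¹ * Real.exp (-(-x - b) ^ 2 / 2))
      = ∫ x in Set.Iic (-a), (Real.sqrt (2 * Real.pi))⁻¹ * Real.exp (-(x + b) ^ 2 / 2) := by
    refine setIntegral_congr_fun measurableSet_Iic (fun x _ => ?_)
    congr 1
    ring_nf
  have h4 : (∫ x in (fun x : ℝ => x + b) ⁻¹' Set.Iic (b - a),
        (Real.sqrt (2 * Real.pi))⁻¹ * Real.exp (-(x + b) ^ 2 / 2))
      = ∫ y in Set.Iic (b - a), (Real.sqrt (2 * Real.pi))⁻¹ * Real.exp (-y ^ 2 / 2) :=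
    hmp.setIntegral_preimage_emb hemb
      (fun y => (Real.sqrt (2 * Real.pi))⁻¹ * Real.exp (-y ^ 2 / 2)) _
  have hpre : (fun x : ℝ => x + b) ⁻¹' Set.Iic (b - a) = Set.Iic (-a) := by
    ext x
    simp only [Set.mem_preimage, Set.mem_Iic]
    constructor <;> intro h <;> linarith
  rw [hpre] at h4
  rw [h1, ← h2, h3, h4, Phi]

/-- If `K > τ` then `E[(e^{sN+m} + τ − K)⁺] = e^{m+s²/2} Φ(d₁) − (K−τ) Φ(d₂)`. -/
theorem call_price_pos_skew_high_strike
    {Ω : Type*} [MeasurableSpace Ω] (P : Measure Ω) [IsProbabilityMeasure P]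
    (N : Ω → ℝ) (hNmeas : Measurable N)
    (hN : Measure.map N P = gaussianReal 0 1)
    (s m τ K : ℝ) (hs : 0 < s) (hK : τ < K) :
    ∫ ω, max (Real.exp (s * N ω + m) + τ - K) 0 ∂P
      = Real.exp (m + s ^ 2 / 2) * Phi ((-Real.log (K - τ) + m + s ^ 2) / s)
        - (K - τ) * Phi ((-Real.log (K - τ) + m) / s) := by
  set k : ℝ := K - τ with hk
  have hkpos : 0 < k := by simp [hk]; linarith
  set c : ℝ := (Real.log k - m) / s with hc
  have hf_cont : Continuous fun x : ℝ => max (Real.exp (s * x + m) + τ - K) 0 := by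
    fun_prop
  -- step 1: transfer to gaussian measure
  have h1 : (∫ ω, max (Real.exp (s * N ω + m) + τ - K) 0 ∂P)
      = ∫ x, max (Real.exp (s * x + m) + τ - K) 0 ∂(gaussianReal 0 1) := by
    rw [← hN]
    exact (integral_map hNmeas.aemeasurable hf_cont.aestronglyMeasurable).symm
  -- step 2: to Lebesgue integral with density
  have h2 : (∫ x, max (Real.exp (s * x + m) + τ - K) 0 ∂(gaussianReal 0 1))
      = ∫ x, max (Real.exp (s * x + m) + τ - K) 0
          * ((Real.sqrt (2 * Real.pi))⁻¹ * Real.exp (-x ^ 2 / 2)) := by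
    rw [gaussianReal_of_var_ne_zero 0 one_ne_zero]
    have hmeas : Measurable fun x : ℝ => Real.toNNReal (gaussianPDFReal 0 1 x) :=
      (measurable_gaussianPDFReal 0 1).real_toNNReal
    rw [show gaussianPDF 0 1 = fun x => ((Real.toNNReal (gaussianPDFReal 0 1 x) : ℝ≥0) : ℝ≥0∞)
      from rfl]
    rw [integral_withDensity_eq_integral_smul hmeas]
    refine integral_congr_ae (Filter.Eventually.of_forall fun x => ?_)
    simp only [NNReal.smul_def, smul_eq_mul,
      Real.coe_toNNReal _ (gaussianPDFReal_nonneg 0 1 x)]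
    rw [mul_comm]
    congr 1
    simp [gaussianPDFReal]
  -- step 3: indicator form
  have h3 : (∫ x, max (Real.exp (s * x + m) + τ - K) 0
          * ((Real.sqrt (2 * Real.pi))⁻¹ * Real.exp (-x ^ 2 / 2)))
      = ∫ x in Set.Ici c, (Real.exp (s * x + m) - k)
          * ((Real.sqrt (2 * Real.pi))⁻¹ * Real.exp (-x ^ 2 / 2)) := by
    rw [← integral_indicator measurableSet_Ici]
    refine integral_congr_ae (Filter.Eventually.of_forall fun x => ?_)
    by_cases hx : x ∈ Set.Ici c
    · simp only [Set.indicator_of_mem hx]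
      have hcx : (Real.log k - m) / s ≤ x := hx
      have hlog : Real.log k ≤ s * x + m := by
        have h' := (div_le_iff₀ hs).mp hcx
        nlinarith [h']
      have hexp : k ≤ Real.exp (s * x + m) := by
        calc k = Real.exp (Real.log k) := (Real.exp_log hkpos).symm
        _ ≤ Real.exp (s * x + m) := Real.exp_le_exp.mpr hlog
      have h0 : (0 : ℝ) ≤ Real.exp (s * x + m) + τ - K := by
        have h'' := hexp
        simp only [hk] at h''
        linarith
      rw [max_eq_left h0, hk]
      ring
    · simp only [Set.indicator_of_notMem hx]
      have hcx : x < (Real.log k - m) / s := lt_of_not_ge hx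
      have hlog : s * x + m < Real.log k := by
        have h' := (lt_div_iff₀ hs).mp hcx
        nlinarith [h']
      have hexp : Real.exp (s * x + m) < k := by
        calc Real.exp (s * x + m) < Real.exp (Real.log k) := Real.exp_lt_exp.mpr hlog
        _ = k := Real.exp_log hkpos
      have h0 : Real.exp (s * x + m) + τ - K ≤ 0 := by
        have h'' := hexp
        simp only [hk] at h''
        linarith
      rw [max_eq_right h0, zero_mul]
  -- key pointwise identity
  have hkey : ∀ x : ℝ, Real.exp (s * x + m) * ((Real.sqrt (2 * Real.pi))⁻¹
        * Real.exp (-x ^ 2 / 2))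
      = Real.exp (m + s ^ 2 / 2) * ((Real.sqrt (2 * Real.pi))⁻¹
        * Real.exp (-(x - s) ^ 2 / 2)) := by
    intro x
    rw [show Real.exp (s * x + m) * ((Real.sqrt (2 * Real.pi))⁻¹ * Real.exp (-x ^ 2 / 2))
        = (Real.sqrt (2 * Real.pi))⁻¹ * (Real.exp (s * x + m) * Real.exp (-x ^ 2 / 2)) by ring,
      show Real.exp (m + s ^ 2 / 2) * ((Real.sqrt (2 * Real.pi))⁻¹
        * Real.exp (-(x - s) ^ 2 / 2))
        = (Real.sqrt (2 * Real.pi))⁻¹ * (Real.exp (m + s ^ 2 / 2)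
          * Real.exp (-(x - s) ^ 2 / 2)) by ring,
      ← Real.exp_add, ← Real.exp_add]
    congr 1
    ring
  -- step 4: split the integral
  have hintA : IntegrableOn (fun x : ℝ => Real.exp (s * x + m)
      * ((Real.sqrt (2 * Real.pi))⁻¹ * Real.exp (-x ^ 2 / 2))) (Set.Ici c) := by
    refine (Integrable.integrableOn ?_)
    refine Integrable.congr (((integrable_phi_shift s).const_mul
      (Real.exp (m + s ^ 2 / 2)))) ?_
    filter_upwards with x
    exact (hkey x).symm
  have hintB : IntegrableOn (fun x : ℝ => k
      * ((Real.sqrt (2 * Real.pi))⁻¹ * Real.exp (-x ^ 2 / 2))) (Set.Ici c) := by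
    refine Integrable.integrableOn (Integrable.const_mul ?_ k)
    simpa using integrable_phi_shift 0
  have h4 : (∫ x in Set.Ici c, (Real.exp (s * x + m) - k)
          * ((Real.sqrt (2 * Real.pi))⁻¹ * Real.exp (-x ^ 2 / 2)))
      = (∫ x in Set.Ici c, Real.exp (s * x + m)
          * ((Real.sqrt (2 * Real.pi))⁻¹ * Real.exp (-x ^ 2 / 2)))
        - ∫ x in Set.Ici c, k * ((Real.sqrt (2 * Real.pi))⁻¹ * Real.exp (-x ^ 2 / 2)) := by
    rw [← integral_sub hintA hintB]
    refine integral_congr_ae (Filter.Eventually.of_forall fun x => ?_)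
    ring
  -- first term
  have h5 : (∫ x in Set.Ici c, Real.exp (s * x + m)
          * ((Real.sqrt (2 * Real.pi))⁻¹ * Real.exp (-x ^ 2 / 2)))
      = Real.exp (m + s ^ 2 / 2) * Phi (s - c) := by
    rw [show (∫ x in Set.Ici c, Real.exp (s * x + m)
          * ((Real.sqrt (2 * Real.pi))⁻¹ * Real.exp (-x ^ 2 / 2)))
        = ∫ x in Set.Ici c, Real.exp (m + s ^ 2 / 2)
          * ((Real.sqrt (2 * Real.pi))⁻¹ * Real.exp (-(x - s) ^ 2 / 2)) from
      setIntegral_congr_fun measurableSet_Ici (fun x _ => hkey x)]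
    rw [integral_const_mul, phi_shift_integral c s]
  -- second term
  have h6 : (∫ x in Set.Ici c, k * ((Real.sqrt (2 * Real.pi))⁻¹ * Real.exp (-x ^ 2 / 2)))
      = k * Phi (-c) := by
    rw [integral_const_mul]
    have := phi_shift_integral c 0
    simp only [sub_zero, zero_sub] at this
    rw [this]
  -- assemble
  rw [h1, h2, h3, h4, h5, h6]
  have hd1 : s - c = (-Real.log (K - τ) + m + s ^ 2) / s := by
    rw [hc, hk]
    field_simp
    ring
  have hd2 : -c = (-Real.log (K - τ) + m) / s := by
    rw [hc, hk]
    field_simp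
    ring
  rw [hd1, hd2, hk]
end

section
/- Let N be standard normal, s > 0, m, τ ∈ ℝ, and K < −τ. Then E[(−e^{sN+m} − τ − K)⁺] = −e^{m + s²/2}·Φ(d₁) + (−K − τ)·Φ(d₂), where d₁ = (ln(−K−τ) − m − s²)/s and d₂ = (ln(−K−τ) − m)/s. -/
open MeasureTheory ProbabilityTheory Real

/-! With `C = -K - τ > 0`, the payoff is `C - e^{sx+m}` for `x ≤ d₂` and `0` beyond, so the price
is `∫_{x ≤ d₂} φ(x) (C - e^{sx+m}) dx`. Completing the square, `φ(x) e^{sx} = e^{s²/2} φ(x - s)`: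
the exponential only shifts the Gaussian density by `s`, and the second term becomes
`e^{m+s²/2} Φ(d₂ - s) = e^{m+s²/2} Φ(d₁)`. -/

open Set NNReal

lemma setIntegral_Iic_comp_sub_right {E : Type*} [NormedAddCommGroup E] [NormedSpace ℝ E]
    (f : ℝ → E) (b c : ℝ) : ∫ x in Iic b, f (x - c) = ∫ x in Iic (b - c), f x := by
  have := (measurePreserving_sub_right volume c).setIntegral_preimage_emb
    (Homeomorph.subRight c).measurableEmbedding f (Iic (b - c))
  rwa [preimage_sub_const_Iic, sub_add_cancel] at this

lemma Phi_eq_setIntegral_gaussianPDFReal (z : ℝ) :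
    Phi z = ∫ t in Iic z, gaussianPDFReal 0 1 t := by
  simp [Phi, gaussianPDFReal]

lemma gaussianPDFReal_mul_exp (μ : ℝ) {v : ℝ≥0} (hv : v ≠ 0) (s x : ℝ) :
    gaussianPDFReal μ v x * exp (s * x)
      = exp (s * μ + v * s ^ 2 / 2) * gaussianPDFReal (μ + v * s) v x := by
  have hv' : (v : ℝ) ≠ 0 := by exact_mod_cast hv
  simp only [gaussianPDFReal]
  rw [mul_left_comm, mul_assoc, ← exp_add, ← exp_add]
  congr 2
  field_simp
  ring

lemma max_sub_exp_eq_indicator {s C : ℝ} (hs : 0 < s) (hC : 0 < C) (m x : ℝ) :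
    max (C - exp (s * x + m)) 0
      = (Iic ((log C - m) / s)).indicator (fun x ↦ C - exp (s * x + m)) x := by
  by_cases hx : x ≤ (log C - m) / s
  · have : exp (s * x + m) ≤ C := by
      rw [← le_log_iff_exp_le hC]
      rw [le_div_iff₀ hs] at hx
      linarith
    rw [indicator_of_mem (mem_Iic.2 hx), max_eq_left (sub_nonneg.2 this)]
  · have : C < exp (s * x + m) := by
      rw [← log_lt_iff_lt_exp hC]
      rw [not_le, div_lt_iff₀ hs] at hx
      linarith
    rw [indicator_of_notMem (notMem_Iic.2 (not_le.1 hx)), max_eq_right (sub_nonpos.2 this.le)]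

lemma gaussianPDFReal_mul_exp_add (s m x : ℝ) :
    gaussianPDFReal 0 1 x * exp (s * x + m)
      = exp (m + s ^ 2 / 2) * gaussianPDFReal 0 1 (x - s) := by
  rw [exp_add, ← mul_assoc, gaussianPDFReal_mul_exp 0 one_ne_zero, gaussianPDFReal_sub]
  simp only [mul_zero, NNReal.coe_one, one_mul, zero_add]
  rw [exp_add m]
  ring

lemma integrable_gaussianPDFReal_mul_exp_add (s m : ℝ) :
    Integrable (fun x ↦ gaussianPDFReal 0 1 x * exp (s * x + m)) := by
  simp_rw [gaussianPDFReal_mul_exp_add]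
  exact ((integrable_gaussianPDFReal 0 1).comp_sub_right s).const_mul _

lemma setIntegral_Iic_gaussianPDFReal_mul_exp_add (s m b : ℝ) :
    ∫ x in Iic b, gaussianPDFReal 0 1 x * exp (s * x + m)
      = exp (m + s ^ 2 / 2) * Phi (b - s) := by
  simp_rw [gaussianPDFReal_mul_exp_add]
  rw [integral_const_mul, setIntegral_Iic_comp_sub_right, Phi_eq_setIntegral_gaussianPDFReal]

lemma integral_max_sub_exp_gaussianReal {s C : ℝ} (hs : 0 < s) (hC : 0 < C) (m : ℝ) :
    ∫ x, max (C - exp (s * x + m)) 0 ∂gaussianReal 0 1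
      = C * Phi ((log C - m) / s) - exp (m + s ^ 2 / 2) * Phi ((log C - m) / s - s) := by
  simp_rw [integral_gaussianReal_eq_integral_smul one_ne_zero, smul_eq_mul,
    max_sub_exp_eq_indicator hs hC m, ← indicator_mul_right]
  rw [integral_indicator measurableSet_Iic]
  simp_rw [mul_sub]
  rw [integral_sub ((integrable_gaussianPDFReal 0 1).mul_const C).integrableOn
    (integrable_gaussianPDFReal_mul_exp_add s m).integrableOn, integral_mul_const,
    ← Phi_eq_setIntegral_gaussianPDFReal, setIntegral_Iic_gaussianPDFReal_mul_exp_add, mul_comm]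

theorem call_price_neg_skew_low_strike_general
    {Ω : Type*} [MeasurableSpace Ω] (P : Measure Ω)
    (N : Ω → ℝ) (hNmeas : Measurable N)
    (hN : Measure.map N P = gaussianReal 0 1)
    (s m τ K : ℝ) (hs : 0 < s) (hK : K < -τ) :
    ∫ ω, max (-Real.exp (s * N ω + m) - τ - K) 0 ∂P
      = -(Real.exp (m + s ^ 2 / 2)
            * Phi ((Real.log (-K - τ) - m - s ^ 2) / s))
        + (-K - τ) * Phi ((Real.log (-K - τ) - m) / s) := by
  have hC : 0 < -K - τ := by linarith
  have payoff : ∀ x, max (-exp (s * x + m) - τ - K) 0 = max ((-K - τ) - exp (s * x + m)) 0 :=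
    fun x ↦ by ring_nf
  have d₁ : (log (-K - τ) - m - s ^ 2) / s = (log (-K - τ) - m) / s - s := by
    field_simp
  rw [← integral_map (f := fun x ↦ max (-exp (s * x + m) - τ - K) 0) hNmeas.aemeasurable
    (by fun_prop), hN]
  simp_rw [payoff]
  rw [integral_max_sub_exp_gaussianReal hs hC, d₁]
  ring

/-- If `K < −τ` then
`E[(−e^{sN+m} − τ − K)⁺] = −e^{m+s²/2} Φ(d₁) + (−K−τ) Φ(d₂)`. -/
theorem call_price_neg_skew_low_strike
    {Ω : Type*} [MeasurableSpace Ω] (P : Measure Ω) [IsProbabilityMeasure P]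
    (N : Ω → ℝ) (hNmeas : Measurable N)
    (hN : Measure.map N P = gaussianReal 0 1)
    (s m τ K : ℝ) (hs : 0 < s) (hK : K < -τ) :
    ∫ ω, max (-Real.exp (s * N ω + m) - τ - K) 0 ∂P
      = -(Real.exp (m + s ^ 2 / 2)
            * Phi ((Real.log (-K - τ) - m - s ^ 2) / s))
        + (-K - τ) * Phi ((Real.log (-K - τ) - m) / s) :=
  call_price_neg_skew_low_strike_general P N hNmeas hN s m τ K hs hK
end

section
/- Let Y ≥ 0 have MGF φ_Y, be independent of standard normal N, and let s > 0, m, τ, K ∈ ℝ with K > τ and φ_Y(s²/2) < ∞. Then E[(e^{s√Y·N+m} + τ − K)⁺] = E[e^{s²Y/2 + m}·Φ(d₁(Y))] − (K − τ)·E[Φ(d₂(Y))], where d₁(y) = (−ln(K−τ) + m + s²y)/(s√y) and d₂(y) = (−ln(K−τ) + m)/(s√y) for y > 0, and the outer expectations are over Y. -/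
open MeasureTheory ProbabilityTheory Real
open scoped ENNReal NNReal

noncomputable def gpdf (t : ℝ) : ℝ := (Real.sqrt (2 * Real.pi))⁻¹ * Real.exp (-t ^ 2 / 2)

lemma gpdf_eq : gpdf = gaussianPDFReal 0 1 := by
  ext t
  simp [gpdf, gaussianPDFReal]

lemma gpdf_nonneg (t : ℝ) : 0 ≤ gpdf t := by unfold gpdf; positivity

lemma gpdf_neg (t : ℝ) : gpdf (-t) = gpdf t := by simp [gpdf]

lemma integrable_gpdf : Integrable gpdf := gpdf_eq ▸ integrable_gaussianPDFReal 0 1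

lemma integral_gpdf : ∫ t, gpdf t = 1 := by
  rw [gpdf_eq]; exact integral_gaussianPDFReal_eq_one 0 one_ne_zero

lemma Phi_eq (z : ℝ) : Phi z = ∫ t in Set.Iic z, gpdf t := rfl

lemma Phi_neg (z : ℝ) : Phi (-z) = ∫ t in Set.Ici z, gpdf t := by
  rw [Phi_eq, ← integral_comp_neg_Ioi, integral_Ici_eq_integral_Ioi]
  exact setIntegral_congr_fun measurableSet_Ioi fun x _ => gpdf_neg x

lemma Phi_mono : Monotone Phi := fun a b hab => by
  rw [Phi_eq, Phi_eq]
  exact setIntegral_mono_set integrable_gpdf.integrableOn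
    (Filter.Eventually.of_forall gpdf_nonneg)
    (HasSubset.Subset.eventuallyLE (Set.Iic_subset_Iic.mpr hab))

lemma measurable_Phi : Measurable Phi := Phi_mono.measurable

lemma Phi_nonneg (z : ℝ) : 0 ≤ Phi z :=
  setIntegral_nonneg measurableSet_Iic fun t _ => gpdf_nonneg t

lemma Phi_le_one (z : ℝ) : Phi z ≤ 1 := by
  rw [Phi_eq, ← integral_gpdf]
  exact setIntegral_le_integral integrable_gpdf (Filter.Eventually.of_forall gpdf_nonneg)

lemma integral_Ici_gpdf_shift (a σ : ℝ) :
    ∫ x in Set.Ici a, gpdf (x - σ) = Phi (σ - a) := by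
  have h := (measurePreserving_sub_right volume σ).setIntegral_preimage_emb
    (MeasurableEquiv.subRight σ).measurableEmbedding gpdf (Set.Ici (a - σ))
  have hpre : (fun x : ℝ => x - σ) ⁻¹' Set.Ici (a - σ) = Set.Ici a := by
    ext x; simp [sub_le_sub_iff_right]
  rw [show σ - a = -(a - σ) by ring, Phi_neg, ← h, hpre]


lemma gpdf_mul_exp (σ m x : ℝ) :
    gpdf x * Real.exp (σ * x + m) = Real.exp (σ ^ 2 / 2 + m) * gpdf (x - σ) := by
  unfold gpdf
  rw [mul_assoc, ← Real.exp_add, mul_left_comm, ← Real.exp_add]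
  congr 2
  ring

lemma integral_gaussian_density (f : ℝ → ℝ) :
    ∫ x, f x ∂(gaussianReal 0 1) = ∫ x, gpdf x * f x := by
  have h1 : gaussianReal 0 1
      = volume.withDensity fun x => ((gaussianPDFReal 0 1 x).toNNReal : ℝ≥0∞) := by
    rw [gaussianReal_of_var_ne_zero _ one_ne_zero]; rfl
  rw [h1, integral_withDensity_eq_integral_smul
    (f := fun x => (gaussianPDFReal 0 1 x).toNNReal)
    (measurable_real_toNNReal.comp (measurable_gaussianPDFReal 0 1)) f]
  refine integral_congr_ae (Filter.Eventually.of_forall fun x => ?_)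
  simp only [Function.comp_apply, NNReal.smul_def, smul_eq_mul,
    Real.coe_toNNReal _ (gaussianPDFReal_nonneg 0 1 x), gpdf_eq]

lemma gaussian_call (σ c m : ℝ) (hσ : 0 < σ) (hc : 0 < c) :
    (∫ x, max (Real.exp (σ * x + m) - c) 0 ∂(gaussianReal 0 1)
      = Real.exp (σ ^ 2 / 2 + m) * Phi ((-Real.log c + m + σ ^ 2) / σ)
        - c * Phi ((-Real.log c + m) / σ))
    ∧ Integrable (fun x => max (Real.exp (σ * x + m) - c) 0) (gaussianReal 0 1) := by
  set a : ℝ := (Real.log c - m) / σ with ha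
  have hind : (fun x => gpdf x * max (Real.exp (σ * x + m) - c) 0)
      = Set.indicator (Set.Ici a) (fun x => gpdf x * (Real.exp (σ * x + m) - c)) := by
    funext x
    by_cases hx : a ≤ x
    · rw [Set.indicator_of_mem (Set.mem_Ici.mpr hx)]
      have : c ≤ Real.exp (σ * x + m) := by
        rw [show c = Real.exp (Real.log c) from (Real.exp_log hc).symm]
        apply Real.exp_le_exp.mpr
        rw [ha] at hx
        nlinarith [(div_le_iff₀ hσ).mp hx]
      rw [max_eq_left (by linarith)]
    · rw [Set.indicator_of_notMem (fun h => hx (Set.mem_Ici.mp h))]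
      have hxa : x < a := lt_of_not_ge hx
      have : Real.exp (σ * x + m) < c := by
        rw [show c = Real.exp (Real.log c) from (Real.exp_log hc).symm]
        apply Real.exp_lt_exp.mpr
        rw [ha] at hxa
        nlinarith [(lt_div_iff₀ hσ).mp hxa]
      rw [max_eq_right (by linarith), mul_zero]
  have hint1 : IntegrableOn (fun x => gpdf x * Real.exp (σ * x + m)) (Set.Ici a) := by
    have : (fun x => gpdf x * Real.exp (σ * x + m))
        = fun x => Real.exp (σ ^ 2 / 2 + m) * gpdf (x - σ) := funext (gpdf_mul_exp σ m)
    rw [this]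
    exact ((integrable_gpdf.comp_sub_right σ).const_mul _).integrableOn
  have hint2 : IntegrableOn (fun x => c * gpdf x) (Set.Ici a) :=
    (integrable_gpdf.const_mul c).integrableOn
  have hintd : IntegrableOn (fun x => gpdf x * (Real.exp (σ * x + m) - c)) (Set.Ici a) := by
    have : (fun x => gpdf x * (Real.exp (σ * x + m) - c))
        = fun x => gpdf x * Real.exp (σ * x + m) - c * gpdf x := by
      funext x; ring
    rw [this]
    exact hint1.sub hint2
  have hmain : ∫ x, gpdf x * max (Real.exp (σ * x + m) - c) 0
      = Real.exp (σ ^ 2 / 2 + m) * Phi ((-Real.log c + m + σ ^ 2) / σ)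
        - c * Phi ((-Real.log c + m) / σ) := by
    rw [hind, integral_indicator measurableSet_Ici]
    have : ∫ x in Set.Ici a, gpdf x * (Real.exp (σ * x + m) - c)
        = (∫ x in Set.Ici a, gpdf x * Real.exp (σ * x + m))
          - ∫ x in Set.Ici a, c * gpdf x := by
      rw [← integral_sub hint1 hint2]
      refine setIntegral_congr_fun measurableSet_Ici fun x _ => by ring
    rw [this]
    have e1 : ∫ x in Set.Ici a, gpdf x * Real.exp (σ * x + m)
        = Real.exp (σ ^ 2 / 2 + m) * Phi ((-Real.log c + m + σ ^ 2) / σ) := by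
      have : ∀ x, gpdf x * Real.exp (σ * x + m)
          = Real.exp (σ ^ 2 / 2 + m) * gpdf (x - σ) := gpdf_mul_exp σ m
      rw [setIntegral_congr_fun measurableSet_Ici fun x _ => this x,
        integral_const_mul, integral_Ici_gpdf_shift]
      congr 1
      rw [ha]
      field_simp
      ring
    have e2 : ∫ x in Set.Ici a, c * gpdf x = c * Phi ((-Real.log c + m) / σ) := by
      rw [integral_const_mul]
      congr 1
      have : (-Real.log c + m) / σ = -a := by rw [ha]; field_simp; ring
      rw [this, Phi_neg]
    rw [e1, e2]
  have hvint : Integrable (fun x => gpdf x * max (Real.exp (σ * x + m) - c) 0) := by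
    rw [hind]
    exact hintd.integrable_indicator measurableSet_Ici
  constructor
  · rw [integral_gaussian_density]; exact hmain
  · rw [gaussianReal_of_var_ne_zero _ one_ne_zero,
      show gaussianPDF 0 1 = fun x => ((gaussianPDFReal 0 1 x).toNNReal : ℝ≥0∞) from rfl]
    rw [integrable_withDensity_iff_integrable_smul
      (f := fun x => (gaussianPDFReal 0 1 x).toNNReal)
      (measurable_real_toNNReal.comp (measurable_gaussianPDFReal 0 1))]
    refine hvint.congr (Filter.Eventually.of_forall fun x => ?_)
    simp only [Function.comp_apply, NNReal.smul_def, smul_eq_mul,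
      Real.coe_toNNReal _ (gaussianPDFReal_nonneg 0 1 x), gpdf_eq]
/-- Mixed call-price formula: for `K > τ`,
`E[(e^{s√Y·N+m} + τ − K)⁺]
  = E[e^{s²Y/2+m} Φ(d₁(Y))] − (K−τ) E[Φ(d₂(Y))]`. -/
theorem mixed_call_price
    {Ω : Type*} [MeasurableSpace Ω] (P : Measure Ω) [IsProbabilityMeasure P]
    (Y N : Ω → ℝ) (hY : Measurable Y) (hNmeas : Measurable N)
    (hYpos : ∀ᵐ ω ∂P, 0 < Y ω)
    (hindep : IndepFun Y N P)
    (hN : Measure.map N P = gaussianReal 0 1)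
    (s m τ K : ℝ) (hs : 0 < s) (hK : τ < K)
    (hint : Integrable (fun ω => Real.exp (s ^ 2 / 2 * Y ω)) P) :
    ∫ ω, max (Real.exp (s * Real.sqrt (Y ω) * N ω + m) + τ - K) 0 ∂P
      = (∫ ω, Real.exp (s ^ 2 * Y ω / 2 + m)
            * Phi ((-Real.log (K - τ) + m + s ^ 2 * Y ω)
                / (s * Real.sqrt (Y ω))) ∂P)
        - (K - τ)
          * ∫ ω, Phi ((-Real.log (K - τ) + m) / (s * Real.sqrt (Y ω))) ∂P := by
  have hc0 : (0 : ℝ) < K - τ := sub_pos.mpr hK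
  set F : ℝ × ℝ → ℝ :=
    fun p => max (Real.exp (s * Real.sqrt p.1 * p.2 + m) - (K - τ)) 0 with hF
  have hFmeas : Measurable F := by
    refine Measurable.max ?_ measurable_const
    exact (((measurable_const.mul
      (Real.continuous_sqrt.measurable.comp measurable_fst)).mul
        measurable_snd).add_const m).exp.sub measurable_const
  set g : ℝ → ℝ := fun y => Real.exp (s ^ 2 * y / 2 + m)
      * Phi ((-Real.log (K - τ) + m + s ^ 2 * y) / (s * Real.sqrt y))
    - (K - τ) * Phi ((-Real.log (K - τ) + m) / (s * Real.sqrt y)) with hg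
  have hm1 : Measurable fun y : ℝ => Real.exp (s ^ 2 * y / 2 + m)
      * Phi ((-Real.log (K - τ) + m + s ^ 2 * y) / (s * Real.sqrt y)) := by
    refine Measurable.mul ?_ ?_
    · exact (((measurable_id.const_mul (s ^ 2)).div_const 2).add_const m).exp
    · exact measurable_Phi.comp
        (((measurable_id.const_mul (s ^ 2)).const_add (-Real.log (K - τ) + m)).div
          (measurable_const.mul Real.continuous_sqrt.measurable))
  have hm2 : Measurable fun y : ℝ =>
      Phi ((-Real.log (K - τ) + m) / (s * Real.sqrt y)) :=
    measurable_Phi.comp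
      (measurable_const.div (measurable_const.mul Real.continuous_sqrt.measurable))
  have hgmeas : Measurable g := hm1.sub (hm2.const_mul (K - τ))
  have hmap : P.map (fun ω => (Y ω, N ω)) = (P.map Y).prod (gaussianReal 0 1) := by
    rw [← hN]
    exact (indepFun_iff_map_prod_eq_prod_map_map hY.aemeasurable
      hNmeas.aemeasurable).mp hindep
  have hμpos : ∀ᵐ y ∂(P.map Y), 0 < y := by
    rw [ae_map_iff hY.aemeasurable (measurableSet_Ioi (a := (0 : ℝ)))]
    exact hYpos
  have hinner : ∀ᵐ y ∂(P.map Y),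
      ∫⁻ x, ENNReal.ofReal (F (y, x)) ∂(gaussianReal 0 1) = ENNReal.ofReal (g y) := by
    filter_upwards [hμpos] with y hy
    have hσ : 0 < s * Real.sqrt y := mul_pos hs (Real.sqrt_pos.mpr hy)
    obtain ⟨heq, hintg⟩ := gaussian_call (s * Real.sqrt y) (K - τ) m hσ hc0
    have hsq : (s * Real.sqrt y) ^ 2 = s ^ 2 * y := by
      rw [mul_pow, Real.sq_sqrt hy.le]
    have h1 : ∫⁻ x, ENNReal.ofReal (F (y, x)) ∂(gaussianReal 0 1)
        = ENNReal.ofReal (∫ x, F (y, x) ∂(gaussianReal 0 1)) :=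
      (ofReal_integral_eq_lintegral_ofReal hintg
        (Filter.Eventually.of_forall fun x => le_max_right _ _)).symm
    rw [h1]
    congr 1
    have h2 : (∫ x, F (y, x) ∂(gaussianReal 0 1))
        = ∫ x, max (Real.exp (s * Real.sqrt y * x + m) - (K - τ)) 0
            ∂(gaussianReal 0 1) := rfl
    rw [h2, heq, hg, hsq]
  have hgnn : ∀ᵐ y ∂(P.map Y), 0 ≤ g y := by
    filter_upwards [hμpos] with y hy
    have hσ : 0 < s * Real.sqrt y := mul_pos hs (Real.sqrt_pos.mpr hy)
    obtain ⟨heq, hintg⟩ := gaussian_call (s * Real.sqrt y) (K - τ) m hσ hc0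
    have hsq : (s * Real.sqrt y) ^ 2 = s ^ 2 * y := by
      rw [mul_pow, Real.sq_sqrt hy.le]
    have : g y = ∫ x, max (Real.exp (s * Real.sqrt y * x + m) - (K - τ)) 0
        ∂(gaussianReal 0 1) := by rw [heq, hg, hsq]
    rw [this]
    exact integral_nonneg fun x => le_max_right _ _
  have step0 : (fun ω => max (Real.exp (s * Real.sqrt (Y ω) * N ω + m) + τ - K) 0)
      = fun ω => F (Y ω, N ω) := by
    funext ω
    simp only [hF]
    congr 1
    ring
  have hA : Integrable (fun ω => Real.exp (s ^ 2 * Y ω / 2 + m)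
      * Phi ((-Real.log (K - τ) + m + s ^ 2 * Y ω) / (s * Real.sqrt (Y ω)))) P := by
    refine Integrable.mono' (hint.const_mul (Real.exp m))
      ((hm1.comp hY).aestronglyMeasurable)
      (Filter.Eventually.of_forall fun ω => ?_)
    rw [Real.norm_eq_abs, abs_mul, abs_of_pos (Real.exp_pos _)]
    have h1 : |Phi ((-Real.log (K - τ) + m + s ^ 2 * Y ω) / (s * Real.sqrt (Y ω)))| ≤ 1 :=
      abs_le.mpr ⟨by linarith [Phi_nonneg ((-Real.log (K - τ) + m + s ^ 2 * Y ω)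
        / (s * Real.sqrt (Y ω)))], Phi_le_one _⟩
    calc Real.exp (s ^ 2 * Y ω / 2 + m) * |Phi _|
        ≤ Real.exp (s ^ 2 * Y ω / 2 + m) * 1 :=
          mul_le_mul_of_nonneg_left h1 (Real.exp_pos _).le
      _ = Real.exp m * Real.exp (s ^ 2 / 2 * Y ω) := by
          rw [mul_one, ← Real.exp_add]; congr 1; ring
  have hB : Integrable (fun ω =>
      Phi ((-Real.log (K - τ) + m) / (s * Real.sqrt (Y ω)))) P := by
    refine Integrable.mono' (integrable_const 1)
      ((hm2.comp hY).aestronglyMeasurable)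
      (Filter.Eventually.of_forall fun ω => ?_)
    rw [Real.norm_eq_abs]
    exact abs_le.mpr ⟨by linarith [Phi_nonneg ((-Real.log (K - τ) + m)
      / (s * Real.sqrt (Y ω)))], Phi_le_one _⟩
  calc ∫ ω, max (Real.exp (s * Real.sqrt (Y ω) * N ω + m) + τ - K) 0 ∂P
      = ∫ ω, F (Y ω, N ω) ∂P := by rw [step0]
    _ = ∫ p, F p ∂((P.map Y).prod (gaussianReal 0 1)) := by
        rw [← hmap, integral_map (hY.prodMk hNmeas).aemeasurable
          hFmeas.aestronglyMeasurable]
    _ = (∫⁻ p, ENNReal.ofReal (F p) ∂((P.map Y).prod (gaussianReal 0 1))).toReal :=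
        integral_eq_lintegral_of_nonneg_ae
          (Filter.Eventually.of_forall fun p => le_max_right _ _)
          hFmeas.aestronglyMeasurable
    _ = (∫⁻ y, ∫⁻ x, ENNReal.ofReal (F (y, x)) ∂(gaussianReal 0 1) ∂(P.map Y)).toReal := by
        rw [lintegral_prod _ hFmeas.ennreal_ofReal.aemeasurable]
    _ = (∫⁻ y, ENNReal.ofReal (g y) ∂(P.map Y)).toReal := by
        rw [lintegral_congr_ae hinner]
    _ = ∫ y, g y ∂(P.map Y) :=
        (integral_eq_lintegral_of_nonneg_ae hgnn hgmeas.aestronglyMeasurable).symm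
    _ = ∫ ω, g (Y ω) ∂P := integral_map hY.aemeasurable hgmeas.aestronglyMeasurable
    _ = (∫ ω, Real.exp (s ^ 2 * Y ω / 2 + m)
            * Phi ((-Real.log (K - τ) + m + s ^ 2 * Y ω) / (s * Real.sqrt (Y ω))) ∂P)
        - (K - τ) * ∫ ω, Phi ((-Real.log (K - τ) + m) / (s * Real.sqrt (Y ω))) ∂P := by
        simp only [hg]
        rw [integral_sub hA (hB.const_mul (K - τ)), integral_const_mul]
end
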